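/- arXiv:1902.02124 — 5 statements merged into one kernel-verified Lean document; each statement's English description precedes it below -/
import Mathlib

section
/- Two k-partial permutations (d₁, ω₁) and (d₂, ω₂) of n lie in the same orbit under the conjugation-type action of B_{kn}^k if and only if |d₁| = |d₂| and ω₁ and ω₂ have the same type (the family of partitions (ω(ρ))_{ρ ⊢ k}). -/
open Equiv Finset

namespace KWr

/-- The `i`-th block `p_k(i)` (0-indexed): elements `x ∈ [kn]` with `x / k = i`. -/
def pk (k n : ℕ) (i : ℕ) : Finset (Fin (k * n)) :=
  Finset.univ.filter (fun x => (x : ℕ) / k = i)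

/-- `w` maps every block onto some block. -/
def IsBlockPerm (k n : ℕ) (w : Perm (Fin (k * n))) : Prop :=
  ∀ i : Fin n, ∃ j : Fin n, (pk k n (i : ℕ)).image w = pk k n (j : ℕ)

theorem isBlockPerm_one (k n : ℕ) : IsBlockPerm k n 1 := fun i =>
  ⟨i, by simp [pk]⟩

theorem isBlockPerm_mul (k n : ℕ) {a b : Perm (Fin (k * n))}
    (ha : IsBlockPerm k n a) (hb : IsBlockPerm k n b) : IsBlockPerm k n (a * b) := by
  intro i
  obtain ⟨j, hj⟩ := hb i
  obtain ⟨l, hl⟩ := ha j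
  refine ⟨l, ?_⟩
  rw [← hl, ← hj, Finset.image_image]
  rfl

theorem isBlockPerm_pow (k n : ℕ) {a : Perm (Fin (k * n))} (ha : IsBlockPerm k n a) :
    ∀ m : ℕ, IsBlockPerm k n (a ^ m) := by
  intro m
  induction m with
  | zero => simpa using isBlockPerm_one k n
  | succ m ih => rw [pow_succ]; exact isBlockPerm_mul k n ih ha

/-- The group `B_{kn}^k` of block permutations, as a subgroup of `S_{kn}`. -/
def Bgrp (k n : ℕ) : Subgroup (Perm (Fin (k * n))) where
  carrier := {w | IsBlockPerm k n w}
  one_mem' := isBlockPerm_one k n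
  mul_mem' := fun ha hb => isBlockPerm_mul k n ha hb
  inv_mem' := by
    intro a ha
    have ho : 0 < orderOf a := orderOf_pos a
    have h1 : a⁻¹ = a ^ (orderOf a - 1) := by
      have h : a ^ (orderOf a - 1) * a = 1 := by
        rw [← pow_succ, Nat.sub_add_cancel ho, pow_orderOf_eq_one]
      exact inv_eq_of_mul_eq_one_left h
    show IsBlockPerm k n a⁻¹
    rw [h1]
    exact isBlockPerm_pow k n ha _

/-- The first element of the `i`-th block. -/
def elemIn (k n : ℕ) (hk : 0 < k) (i : Fin n) : Fin (k * n) :=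
  ⟨(i : ℕ) * k, by
    calc (i : ℕ) * k < n * k := by
          exact Nat.mul_lt_mul_of_lt_of_le i.2 (le_refl k) hk
      _ = k * n := Nat.mul_comm n k⟩

/-- The map induced by `w` on block indices. -/
def blockMap (k n : ℕ) (hk : 0 < k) (w : Perm (Fin (k * n))) (i : Fin n) : Fin n :=
  ⟨((w (elemIn k n hk i)) : ℕ) / k, by
    refine (Nat.div_lt_iff_lt_mul hk).mpr ?_
    calc ((w (elemIn k n hk i)) : ℕ) < k * n := (w (elemIn k n hk i)).2
      _ = n * k := Nat.mul_comm k n⟩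

/-- The permutation `p_w` of block indices induced by a block permutation `w`. -/
noncomputable def pPerm (k n : ℕ) (hk : 0 < k) (w : Perm (Fin (k * n))) : Perm (Fin n) :=
  if h : Function.Bijective (blockMap k n hk w) then Equiv.ofBijective _ h else 1

/-- Length of the cycle of `i` under `p`. -/
noncomputable def cycLen {n : ℕ} (p : Perm (Fin n)) (i : Fin n) : ℕ := Function.minimalPeriod p i

/-- The `a`-th element of the `i`-th block. -/
def inBlock (k n : ℕ) (hk : 0 < k) (i : Fin n) (a : Fin k) : Fin (k * n) :=
  ⟨(i : ℕ) * k + (a : ℕ), by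
    calc (i : ℕ) * k + (a : ℕ) < (i : ℕ) * k + k := Nat.add_lt_add_left a.2 _
      _ = ((i : ℕ) + 1) * k := by ring
      _ ≤ n * k := Nat.mul_le_mul_right k i.2
      _ = k * n := Nat.mul_comm n k⟩

/-- The cycle product of `w` at the block `i`: the return map of `w` on the block `i`,
viewed as a permutation of `Fin k`. -/
noncomputable def cycProd (k n : ℕ) (hk : 0 < k) (w : Perm (Fin (k * n))) (i : Fin n) :
    Perm (Fin k) :=
  if h : Function.Bijective (fun a : Fin k =>
      (⟨((w ^ cycLen (pPerm k n hk w) i) (inBlock k n hk i a) : ℕ) % k,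
        Nat.mod_lt _ hk⟩ : Fin k))
  then Equiv.ofBijective _ h else 1

/-- The partition `(1^k)` of `k`. -/
def onePartition (k : ℕ) : Nat.Partition k where
  parts := Multiset.replicate k 1
  parts_pos := fun {i} hi => by rw [Multiset.eq_of_mem_replicate hi]; exact one_pos
  parts_sum := by simp

-- The type of a block permutation `w` of `[kn]`: for each partition `ρ` of `k`, the
-- multiset `tyFam k n hk w ρ` collects, over all cycles of the induced block permutation
-- `p_w` whose cycle product has cycle type `ρ`, the length of the cycle.
open scoped Classical in
noncomputable def tyFam (k n : ℕ) (hk : 0 < k) (w : Perm (Fin (k * n)))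
    (ρ : Nat.Partition k) : Multiset ℕ :=
  (Finset.univ.filter (fun i : Fin n =>
      (∀ j : Fin n, (pPerm k n hk w).SameCycle i j → i ≤ j) ∧
      (cycProd k n hk w i).partition.parts = ρ.parts)).val.map
    (fun i => cycLen (pPerm k n hk w) i)

/-- Total size of a family of partitions indexed by the partitions of `k`. -/
noncomputable def famSize (k : ℕ) (Λ : Nat.Partition k → Multiset ℕ) : ℕ :=
  ∑ ρ : Nat.Partition k, (Λ ρ).sum

-- Complete a family of partitions `Λ` to total size `n` by adding parts `1`
-- to the component indexed by `(1^k)`.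
open scoped Classical in
noncomputable def ExtFam (k n : ℕ) (Λ : Nat.Partition k → Multiset ℕ) :
    Nat.Partition k → Multiset ℕ := fun ρ =>
  if ρ = onePartition k then Λ ρ + Multiset.replicate (n - famSize k Λ) 1 else Λ ρ

/-- `z_λ = ∏ r, r^{m_r(λ)} m_r(λ)!` for a partition given as a multiset of parts. -/
def zOf (m : Multiset ℕ) : ℕ :=
  ∏ r ∈ m.toFinset, r ^ m.count r * Nat.factorial (m.count r)

/-- `Z_Λ = ∏_{λ ⊢ k} z_{Λ(λ)} z_λ^{l(Λ(λ))}`. -/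
noncomputable def ZFam (k : ℕ) (Λ : Nat.Partition k → Multiset ℕ) : ℕ :=
  ∏ ρ : Nat.Partition k, zOf (Λ ρ) * zOf ρ.parts ^ (Multiset.card (Λ ρ))

/-- A `k`-partial permutation of `n`, encoded as a pair `(s, w)` where `s` is the set of
block indices of `d` and `w` is the extension of `ω` to `[kn]` by the identity:
`w` is a block permutation fixing pointwise every block outside `s`. -/
def IsKPP (k n : ℕ) (pr : Finset (Fin n) × Perm (Fin (k * n))) : Prop :=
  IsBlockPerm k n pr.2 ∧
    ∀ x : Fin (k * n), (¬ ∃ i ∈ pr.1, (x : ℕ) / k = (i : ℕ)) → pr.2 x = x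

/-- The set of `k`-partial permutations of `n`. -/
def KPP (k n : ℕ) : Type := {pr : Finset (Fin n) × Perm (Fin (k * n)) // IsKPP k n pr}

/-- The action `σ · (d, ω) = (σ(d), σωσ⁻¹)` on (the underlying data of)
`k`-partial permutations. -/
noncomputable def actKPP (k n : ℕ) (hk : 0 < k) (σ : Perm (Fin (k * n)))
    (pr : Finset (Fin n) × Perm (Fin (k * n))) : Finset (Fin n) × Perm (Fin (k * n)) :=
  (pr.1.image (fun i => pPerm k n hk σ i), σ * pr.2 * σ⁻¹)

/-- A `k`-partial permutation `(d, ω)` has type `Λ` (a family of partitions indexed by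
the partitions of `k`) iff `d` consists of `|Λ|` blocks and the type of `ω` is `Λ`;
in terms of the global extension `w`, the type of `w` is `Λ` completed with
`n - |Λ|` parts equal to `1` in the component `(1^k)`. -/
def HasTypeKPP (k n : ℕ) (hk : 0 < k) (p : KPP k n)
    (Λ : Nat.Partition k → Multiset ℕ) : Prop :=
  p.val.1.card = famSize k Λ ∧ ∀ ρ, tyFam k n hk p.val.2 ρ = ExtFam k n Λ ρ

/-- `deg₁(d, ω)`: the number of blocks of `d` plus the number of blocks of `d` on which
`ω` acts as the identity. -/
def deg1 (k n : ℕ) (pr : Finset (Fin n) × Perm (Fin (k * n))) : ℕ :=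
  pr.1.card +
    (pr.1.filter (fun i : Fin n => ∀ x : Fin (k * n), (x : ℕ) / k = (i : ℕ) → pr.2 x = x)).card


/-- The automorphism of `S_k^n` permuting coordinates by `σ`. -/
def permCoordAut (k n : ℕ) (σ : Perm (Fin n)) : MulAut (Fin n → Perm (Fin k)) where
  toFun f := f ∘ σ.symm
  invFun f := f ∘ σ
  left_inv f := by funext i; simp
  right_inv f := by funext i; simp
  map_mul' f g := rfl

/-- The action of `S_n` on `S_k^n` permuting coordinates, as a homomorphism. -/
def permCoordHom (k n : ℕ) : Perm (Fin n) →* MulAut (Fin n → Perm (Fin k)) where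
  toFun := permCoordAut k n
  map_one' := by apply MulEquiv.ext; intro f; rfl
  map_mul' σ τ := by apply MulEquiv.ext; intro f; rfl

-- The class sum, in the group algebra of `S_n`, of the permutations of cycle type `m`.
open scoped Classical in
noncomputable def CS (n : ℕ) (m : Multiset ℕ) : MonoidAlgebra ℂ (Perm (Fin n)) :=
  ∑ σ ∈ Finset.univ.filter (fun σ : Perm (Fin n) => σ.partition.parts = m),
    MonoidAlgebra.of ℂ (Perm (Fin n)) σ

theorem twoPos : (0 : ℕ) < 2 := by norm_num

-- The class sum, in the group algebra of the hyperoctahedral group `B_{2n}^2`, of the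
-- conjugacy class indexed by the bipartition `(l1, l2)` of `n`, where `l1` corresponds
-- to the partition `(1,1)` of `2` and `l2` to the partition `(2)`.
open scoped Classical in
noncomputable def CB (n : ℕ) (l1 l2 : Multiset ℕ) : MonoidAlgebra ℂ (Bgrp 2 n) :=
  ∑ w ∈ Finset.univ.filter (fun w : Bgrp 2 n =>
      tyFam 2 n twoPos (w : Perm (Fin (2 * n))) (onePartition 2) = l1 ∧
      tyFam 2 n twoPos (w : Perm (Fin (2 * n))) (Nat.Partition.indiscrete 2) = l2),
    MonoidAlgebra.of ℂ (Bgrp 2 n) w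

/-!
A block permutation `w` of `[kn]` is a permutation `P` of the `n` blocks decorated by the
bijections `u i : [k] → [k]` with which `w` carries each block `i` onto the block `P i`; the
type of `w` records, for every cycle of `P`, its length and the cycle type of its return map
(the product of the `u`'s along the cycle). Conjugating by a block permutation `(φ, τ)`
moves the cycles of `P` by `φ` and conjugates each return map by a value of `τ`, so the type
is invariant. Conversely, if two block permutations have the same type, match their cycles
bijectively so that lengths and return-map classes agree, pick conjugators of the matched
return maps and propagate them along the cycles: this builds a conjugating block permutation.
Blocks outside the support are trivial cycles, and `|d₁| = |d₂|` lets the matching respect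
the supports as well.
-/

section Cycles

variable {m : ℕ} {p : Perm (Fin m)} {i j : Fin m}

lemma cycLen_pos (p : Perm (Fin m)) (i : Fin m) : 0 < cycLen p i :=
  Function.minimalPeriod_pos_of_mem_periodicPts (p.injective.mem_periodicPts i)

lemma pow_cycLen_apply (p : Perm (Fin m)) (i : Fin m) : (p ^ cycLen p i) i = i := by
  have h := Function.iterate_minimalPeriod (f := p) (x := i)
  rwa [Perm.iterate_eq_pow] at h

lemma pow_mod_cycLen_apply (p : Perm (Fin m)) (i : Fin m) (t : ℕ) :
    (p ^ (t % cycLen p i)) i = (p ^ t) i := by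
  have h := Function.iterate_mod_minimalPeriod_eq (f := p) (x := i) (n := t)
  rwa [Perm.iterate_eq_pow, Perm.iterate_eq_pow] at h

lemma eq_of_pow_apply_eq {s t : ℕ} (hs : s < cycLen p i) (ht : t < cycLen p i)
    (h : (p ^ s) i = (p ^ t) i) : s = t :=
  Function.iterate_injOn_Iio_minimalPeriod hs ht (by simpa only [Perm.iterate_eq_pow] using h)

lemma cycLen_eq_one_iff : cycLen p i = 1 ↔ p i = i :=
  Function.minimalPeriod_eq_one_iff_isFixedPt

lemma cycLen_apply_of_semiconj {m' : ℕ} {P₁ : Perm (Fin m)} {P₂ : Perm (Fin m')}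
    {φ : Fin m → Fin m'} (hφ : Function.Injective φ) (h : Function.Semiconj φ P₁ P₂)
    (i : Fin m) : cycLen P₂ (φ i) = cycLen P₁ i := by
  refine Function.minimalPeriod_eq_minimalPeriod_iff.mpr fun t => ?_
  rw [Function.IsPeriodicPt, Function.IsFixedPt, ← (h.iterate_right t) i, hφ.eq_iff]
  rfl

def IsRep (p : Perm (Fin m)) (i : Fin m) : Prop :=
  ∀ j : Fin m, p.SameCycle i j → i ≤ j

noncomputable def repOf (p : Perm (Fin m)) (i : Fin m) : Fin m :=
  (univ.filter (p.SameCycle i)).min' ⟨i, mem_filter.mpr ⟨mem_univ i, Perm.SameCycle.refl p i⟩⟩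

lemma sameCycle_repOf (p : Perm (Fin m)) (i : Fin m) : p.SameCycle i (repOf p i) :=
  (mem_filter.mp (min'_mem _ _)).2

lemma repOf_le (h : p.SameCycle i j) : repOf p i ≤ j :=
  min'_le _ _ (by simpa using h)

lemma repOf_eq_of_sameCycle (h : p.SameCycle i j) : repOf p i = repOf p j :=
  le_antisymm (repOf_le (h.trans (sameCycle_repOf p j)))
    (repOf_le (h.symm.trans (sameCycle_repOf p i)))

lemma repOf_apply (p : Perm (Fin m)) (i : Fin m) : repOf p (p i) = repOf p i :=
  (repOf_eq_of_sameCycle (Perm.SameCycle.refl p i).apply_right).symm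

lemma isRep_repOf (p : Perm (Fin m)) (i : Fin m) : IsRep p (repOf p i) :=
  fun _ hj => repOf_le ((sameCycle_repOf p i).trans hj)

lemma IsRep.repOf_eq (h : IsRep p i) : repOf p i = i :=
  le_antisymm (repOf_le (Perm.SameCycle.refl p i)) (h _ (sameCycle_repOf p i))

lemma IsRep.eq_of_sameCycle (hi : IsRep p i) (hj : IsRep p j) (h : p.SameCycle i j) : i = j :=
  le_antisymm (hi j h) (hj i h.symm)

lemma isRep_of_apply_eq_self (h : p i = i) : IsRep p i := by
  intro j hj
  obtain ⟨t, rfl⟩ := hj.exists_nat_pow_eq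
  rw [Perm.pow_apply_eq_self_of_apply_eq_self h t]

lemma apply_repOf {β : Type*} {f : Fin m → β} (hf : ∀ i, f (p i) = f i) (i : Fin m) :
    f (repOf p i) = f i := by
  obtain ⟨t, ht⟩ := (sameCycle_repOf p i).exists_nat_pow_eq
  rw [← ht]
  clear ht
  induction t with
  | zero => rfl
  | succ t ih => rw [pow_succ', Perm.mul_apply, hf, ih]

lemma sameCycle_apply_of_semiconj {P₁ P₂ φ : Perm (Fin m)} (h : Function.Semiconj φ P₁ P₂) :
    P₂.SameCycle (φ i) (φ j) ↔ P₁.SameCycle i j := by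
  have hconj : P₂ = φ * P₁ * φ⁻¹ := Equiv.ext fun x => by simpa using (h (φ⁻¹ x)).symm
  rw [hconj, Perm.sameCycle_conj]
  simp

lemma repOf_apply_repOf_of_semiconj {P₁ P₂ φ : Perm (Fin m)} (h : Function.Semiconj φ P₁ P₂)
    (i : Fin m) : repOf P₂ (φ (repOf P₁ i)) = repOf P₂ (φ i) :=
  repOf_eq_of_sameCycle ((sameCycle_apply_of_semiconj h).mpr (sameCycle_repOf P₁ i).symm)

lemma exists_pow_repOf_eq (p : Perm (Fin m)) (i : Fin m) :
    ∃ t < cycLen p (repOf p i), (p ^ t) (repOf p i) = i := by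
  obtain ⟨t, ht⟩ := (sameCycle_repOf p i).symm.exists_nat_pow_eq
  exact ⟨t % cycLen p (repOf p i), Nat.mod_lt _ (cycLen_pos _ _), by rw [pow_mod_cycLen_apply, ht]⟩

/-- The position of `i` on its cycle, counted from the cycle representative. -/
noncomputable def cyclePos (p : Perm (Fin m)) (i : Fin m) : ℕ :=
  (exists_pow_repOf_eq p i).choose

lemma cyclePos_lt (p : Perm (Fin m)) (i : Fin m) : cyclePos p i < cycLen p (repOf p i) :=
  (exists_pow_repOf_eq p i).choose_spec.1

lemma pow_cyclePos_apply (p : Perm (Fin m)) (i : Fin m) : (p ^ cyclePos p i) (repOf p i) = i :=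
  (exists_pow_repOf_eq p i).choose_spec.2

lemma cyclePos_eq {s : ℕ} (hs : s < cycLen p (repOf p i)) (h : (p ^ s) (repOf p i) = i) :
    cyclePos p i = s :=
  eq_of_pow_apply_eq (cyclePos_lt p i) hs ((pow_cyclePos_apply p i).trans h.symm)

lemma IsRep.cyclePos_eq_zero (h : IsRep p i) : cyclePos p i = 0 :=
  cyclePos_eq (cycLen_pos _ _) (by rw [h.repOf_eq]; rfl)

lemma cyclePos_apply (p : Perm (Fin m)) (i : Fin m) :
    cyclePos p (p i) = (cyclePos p i + 1) % cycLen p (repOf p i) := by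
  rw [← repOf_apply p i]
  refine cyclePos_eq (Nat.mod_lt _ (cycLen_pos _ _)) ?_
  rw [pow_mod_cycLen_apply, repOf_apply, pow_succ', Perm.mul_apply, pow_cyclePos_apply]

end Cycles

section PathProducts

variable {α G : Type*} [Group G]

def pathProd (P : Perm α) (u : α → G) : ℕ → α → G
  | 0, _ => 1
  | t + 1, i => u ((P ^ t) i) * pathProd P u t i

lemma pathProd_intertwine {P₁ P₂ : Perm α} {u₁ u₂ : α → G} {φ : α → α} {τ : α → G}
    (hφ : Function.Semiconj φ P₁ P₂) (hτ : ∀ i, τ (P₁ i) * u₁ i = u₂ (φ i) * τ i) (t : ℕ)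
    (i : α) : pathProd P₂ u₂ t (φ i) * τ i = τ ((P₁ ^ t) i) * pathProd P₁ u₁ t i := by
  induction t with
  | zero => simp [pathProd]
  | succ t ih =>
    have hpow : (P₂ ^ t) (φ i) = φ ((P₁ ^ t) i) := by
      simpa only [Perm.coe_pow] using ((hφ.iterate_right t) i).symm
    rw [pathProd, pathProd, mul_assoc, ih, hpow, ← mul_assoc, ← hτ, pow_succ', Perm.mul_apply,
      mul_assoc]

variable {m : ℕ}

noncomputable def cycleProd (P : Perm (Fin m)) (u : Fin m → G) (i : Fin m) : G :=
  pathProd P u (cycLen P i) i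

lemma isConj_cycleProd_of_intertwine {P₁ P₂ : Perm (Fin m)} {u₁ u₂ : Fin m → G}
    {φ : Fin m → Fin m} {τ : Fin m → G} (hφinj : Function.Injective φ)
    (hφ : Function.Semiconj φ P₁ P₂) (hτ : ∀ i, τ (P₁ i) * u₁ i = u₂ (φ i) * τ i) (i : Fin m) :
    IsConj (cycleProd P₁ u₁ i) (cycleProd P₂ u₂ (φ i)) := by
  refine isConj_iff.mpr ⟨τ i, ?_⟩
  have h := pathProd_intertwine hφ hτ (cycLen P₁ i) i
  rw [pow_cycLen_apply] at h
  rw [cycleProd, cycleProd, cycLen_apply_of_semiconj hφinj hφ, ← h, mul_inv_cancel_right]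

end PathProducts

section CycleMatching

variable {m : ℕ} {G : Type*} [Group G] {P₁ P₂ : Perm (Fin m)} {u₁ u₂ : Fin m → G}
  (ψ : {r // IsRep P₁ r} → {r // IsRep P₂ r})

noncomputable def cycleRep (P : Perm (Fin m)) (i : Fin m) : {r // IsRep P r} :=
  ⟨repOf P i, isRep_repOf P i⟩

/- The intertwiner sends the point at position `t` on the cycle of `r` to the point at
position `t` on the cycle of `ψ r`, and twists by the path products up to these points on
either side of a conjugator `c r` of the two return maps. -/
noncomputable def matchFun (i : Fin m) : Fin m :=
  (P₂ ^ cyclePos P₁ i) (ψ (cycleRep P₁ i))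

variable {ψ}

lemma matchFun_semiconj (hlen : ∀ r, cycLen P₂ (ψ r) = cycLen P₁ r) :
    Function.Semiconj (matchFun ψ) P₁ P₂ := by
  intro i
  have hrep : cycleRep P₁ (P₁ i) = cycleRep P₁ i := Subtype.ext (repOf_apply P₁ i)
  rw [matchFun, matchFun, hrep, cyclePos_apply, ← Perm.mul_apply, ← pow_succ']
  have hL : cycLen P₁ (repOf P₁ i) = cycLen P₂ (ψ (cycleRep P₁ i)) :=
    (hlen (cycleRep P₁ i)).symm
  rw [hL, pow_mod_cycLen_apply]

lemma matchFun_injective (hψ : Function.Injective ψ)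
    (hlen : ∀ r, cycLen P₂ (ψ r) = cycLen P₁ r) : Function.Injective (matchFun ψ) := by
  intro i j h
  have hi : P₂.SameCycle (ψ (cycleRep P₁ i)) (matchFun ψ i) :=
    Perm.sameCycle_pow_right.mpr (Perm.SameCycle.refl _ _)
  have hj : P₂.SameCycle (ψ (cycleRep P₁ j)) (matchFun ψ j) :=
    Perm.sameCycle_pow_right.mpr (Perm.SameCycle.refl _ _)
  rw [h] at hi
  have hsame := hi.trans hj.symm
  have hrep : cycleRep P₁ i = cycleRep P₁ j :=
    hψ (Subtype.ext ((ψ _).2.eq_of_sameCycle (ψ _).2 hsame))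
  have hpos : cyclePos P₁ i = cyclePos P₁ j := by
    have hlt : ∀ l, cyclePos P₁ l < cycLen P₂ (ψ (cycleRep P₁ l)) := fun l => by
      rw [hlen]; exact cyclePos_lt P₁ l
    have hj' := hlt j
    rw [← hrep] at hj'
    refine eq_of_pow_apply_eq (hlt i) hj' ?_
    rw [← matchFun, h, matchFun, hrep]
  rw [← pow_cyclePos_apply P₁ i, ← pow_cyclePos_apply P₁ j, hpos]
  exact congrArg (fun r : {r // IsRep P₁ r} => (P₁ ^ cyclePos P₁ j) r) hrep

lemma matchFun_rep (r : {r // IsRep P₁ r}) : matchFun ψ r = ψ r := by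
  rw [matchFun, r.2.cyclePos_eq_zero, pow_zero, Perm.one_apply]
  exact congrArg (fun r => (ψ r : Fin m)) (Subtype.ext r.2.repOf_eq)

variable (ψ) in
noncomputable def matchTwist (c : {r // IsRep P₁ r} → G) (i : Fin m) : G :=
  pathProd P₂ u₂ (cyclePos P₁ i) (ψ (cycleRep P₁ i)) * c (cycleRep P₁ i) *
    (pathProd P₁ u₁ (cyclePos P₁ i) (cycleRep P₁ i))⁻¹

lemma matchTwist_intertwine (hlen : ∀ r, cycLen P₂ (ψ r) = cycLen P₁ r)
    {c : {r // IsRep P₁ r} → G}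
    (hc : ∀ r : {r // IsRep P₁ r}, c r * cycleProd P₁ u₁ r * (c r)⁻¹ = cycleProd P₂ u₂ (ψ r))
    (i : Fin m) :
    matchTwist (u₁ := u₁) (u₂ := u₂) ψ c (P₁ i) * u₁ i
      = u₂ (matchFun ψ i) * matchTwist (u₁ := u₁) (u₂ := u₂) ψ c i := by
  have hrep : cycleRep P₁ (P₁ i) = cycleRep P₁ i := Subtype.ext (repOf_apply P₁ i)
  simp only [matchTwist, hrep]
  set r := cycleRep P₁ i
  set t := cyclePos P₁ i
  set T : ℕ → G := fun s => pathProd P₂ u₂ s (ψ r) * c r * (pathProd P₁ u₁ s r)⁻¹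
  have hperiod : T (cycLen P₁ r) = T 0 := by
    have h := hc r
    rw [cycleProd, cycleProd, hlen] at h
    simp only [T, pathProd, ← h]
    group
  have hnext : T ((t + 1) % cycLen P₁ r) = T (t + 1) := by
    have hle : t + 1 ≤ cycLen P₁ r := cyclePos_lt P₁ i
    rcases hle.lt_or_eq with hlt | heq
    · rw [Nat.mod_eq_of_lt hlt]
    · rw [heq, Nat.mod_self, hperiod]
  have hpos : cyclePos P₁ (P₁ i) = (t + 1) % cycLen P₁ r := cyclePos_apply P₁ i
  change T (cyclePos P₁ (P₁ i)) * u₁ i = u₂ (matchFun ψ i) * T t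
  rw [hpos, hnext]
  have hi : (P₁ ^ t) r = i := pow_cyclePos_apply P₁ i
  have hφi : (P₂ ^ t) (ψ r) = matchFun ψ i := rfl
  simp only [T, pathProd, hi, hφi]
  group

/-- Conjugacy criterion in the wreath product `G ≀ Sₘ`. -/
theorem exists_intertwine_of_cycleMatching (hψ : Function.Injective ψ)
    (hlen : ∀ r, cycLen P₂ (ψ r) = cycLen P₁ r)
    (hconj : ∀ r : {r // IsRep P₁ r}, IsConj (cycleProd P₁ u₁ r) (cycleProd P₂ u₂ (ψ r))) :
    ∃ (φ : Perm (Fin m)) (τ : Fin m → G), Function.Semiconj φ P₁ P₂ ∧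
      (∀ i, τ (P₁ i) * u₁ i = u₂ (φ i) * τ i) ∧ ∀ r : {r // IsRep P₁ r}, φ r = ψ r := by
  choose c hc using fun r => isConj_iff.mp (hconj r)
  exact ⟨Equiv.ofBijective _ (Finite.injective_iff_bijective.mp (matchFun_injective hψ hlen)),
    matchTwist ψ c, matchFun_semiconj hlen, matchTwist_intertwine hlen hc, matchFun_rep⟩

end CycleMatching

section Counting

open scoped Classical in
lemma exists_equiv_subtype_of_card_eq {α β γ : Type*} [Fintype α] [Fintype β] [DecidableEq γ]
    {p : α → Prop} {q : β → Prop} {f : α → γ} {g : β → γ}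
    (h : ∀ c, #{a | p a ∧ f a = c} = #{b | q b ∧ g b = c}) :
    ∃ e : {a // p a} ≃ {b // q b}, ∀ a, g (e a) = f a := by
  have hfib : ∀ c, Fintype.card {a : {a // p a} // f a = c}
      = Fintype.card {b : {b // q b} // g b = c} := fun c => by
    rw [Fintype.card_congr (Equiv.subtypeSubtypeEquivSubtypeInter p (f · = c)),
      Fintype.card_congr (Equiv.subtypeSubtypeEquivSubtypeInter q (g · = c)),
      Fintype.card_subtype, Fintype.card_subtype, h c]
  exact ⟨_, Equiv.ofFiberEquiv_map fun c => Fintype.equivOfCardEq (hfib c)⟩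

variable {m : ℕ}

open scoped Classical in
lemma card_isRep_eq_of_semiconj {β : Type*} [DecidableEq β] {P₁ P₂ φ : Perm (Fin m)}
    (hφ : Function.Semiconj φ P₁ P₂) {f₁ f₂ : Fin m → β} (hf : ∀ i, f₂ (φ i) = f₁ i)
    (hf₁ : ∀ i, f₁ (P₁ i) = f₁ i) (hf₂ : ∀ i, f₂ (P₂ i) = f₂ i) (c : β) :
    #{r | IsRep P₁ r ∧ f₁ r = c} = #{r | IsRep P₂ r ∧ f₂ r = c} := by
  have hφ' : Function.Semiconj ⇑φ⁻¹ P₂ P₁ := fun x => φ.injective (by rw [hφ]; simp)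
  refine card_nbij' (fun r => repOf P₂ (φ r)) (fun s => repOf P₁ (φ⁻¹ s)) ?_ ?_ ?_ ?_
  · intro r hr
    simp only [coe_filter, Set.mem_ofPred_eq, mem_univ, true_and] at hr ⊢
    exact ⟨isRep_repOf _ _, by rw [apply_repOf hf₂, hf, hr.2]⟩
  · intro s hs
    simp only [coe_filter, Set.mem_ofPred_eq, mem_univ, true_and] at hs ⊢
    refine ⟨isRep_repOf _ _, ?_⟩
    rw [apply_repOf hf₁, ← hf, ← hs.2]
    simp
  · intro r hr
    simp only [coe_filter, Set.mem_ofPred_eq, mem_univ, true_and] at hr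
    dsimp only
    rw [repOf_apply_repOf_of_semiconj hφ']
    simp [hr.1.repOf_eq]
  · intro s hs
    simp only [coe_filter, Set.mem_ofPred_eq, mem_univ, true_and] at hs
    dsimp only
    rw [repOf_apply_repOf_of_semiconj hφ]
    simp [hs.1.repOf_eq]

end Counting

section Blocks

variable {k n : ℕ} {hk : 0 < k}

@[simp] lemma inBlock_div (hk : 0 < k) (i : Fin n) (a : Fin k) :
    (inBlock k n hk i a : ℕ) / k = i := by
  simp [inBlock, Nat.add_div_of_dvd_right (Dvd.intro_left _ rfl), Nat.div_eq_of_lt a.2, hk]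

@[simp] lemma inBlock_mod (hk : 0 < k) (i : Fin n) (a : Fin k) :
    (inBlock k n hk i a : ℕ) % k = a := by
  simp [inBlock, Nat.mod_eq_of_lt a.2]

def blockEquiv (hk : 0 < k) : Fin n × Fin k ≃ Fin (k * n) where
  toFun x := inBlock k n hk x.1 x.2
  invFun x := (⟨x / k, Nat.div_lt_of_lt_mul x.2⟩, ⟨x % k, Nat.mod_lt _ hk⟩)
  left_inv x := by ext <;> simp
  right_inv x := Fin.ext (Nat.div_add_mod' x k)

lemma inBlock_inj {i j : Fin n} {a b : Fin k} :
    inBlock k n hk i a = inBlock k n hk j b ↔ i = j ∧ a = b :=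
  ((blockEquiv hk).injective.eq_iff (a := (i, a)) (b := (j, b))).trans Prod.ext_iff

lemma mem_pk_iff {x : Fin (k * n)} {i : Fin n} : x ∈ pk k n i ↔ ∃ a, inBlock k n hk i a = x := by
  obtain ⟨⟨j, b⟩, rfl⟩ := (blockEquiv hk).surjective x
  simp [pk, blockEquiv, Fin.val_inj, inBlock_inj, eq_comm]

def HasBlockForm (hk : 0 < k) (w : Perm (Fin (k * n))) (φ : Fin n → Fin n)
    (τ : Fin n → Perm (Fin k)) : Prop :=
  ∀ i a, w (inBlock k n hk i a) = inBlock k n hk (φ i) (τ i a)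

variable {v w σ : Perm (Fin (k * n))} {φ φ' : Fin n → Fin n} {τ τ' : Fin n → Perm (Fin k)}

lemma HasBlockForm.unique (h : HasBlockForm hk w φ τ) (h' : HasBlockForm hk w φ' τ') :
    φ = φ' ∧ τ = τ' := by
  have key := fun i a => inBlock_inj.mp ((h i a).symm.trans (h' i a))
  exact ⟨funext fun i => (key i ⟨0, hk⟩).1, funext fun i => Equiv.ext fun a => (key i a).2⟩

lemma HasBlockForm.ext (hv : HasBlockForm hk v φ τ) (hw : HasBlockForm hk w φ τ) : v = w := by
  ext1 x
  obtain ⟨⟨i, a⟩, rfl⟩ := (blockEquiv hk).surjective x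
  exact (hv i a).trans (hw i a).symm

lemma HasBlockForm.mul (hv : HasBlockForm hk v φ τ) (hw : HasBlockForm hk w φ' τ') :
    HasBlockForm hk (v * w) (φ ∘ φ') (fun i => τ (φ' i) * τ' i) := fun i a => by
  simp [hw i a, hv _ _]

lemma HasBlockForm.pow {P : Perm (Fin n)} {u : Fin n → Perm (Fin k)}
    (h : HasBlockForm hk w P u) (t : ℕ) : HasBlockForm hk (w ^ t) ⇑(P ^ t) (pathProd P u t) := by
  induction t with
  | zero => intro i a; rfl
  | succ t ih => rw [pow_succ', pow_succ', Perm.coe_mul]; exact h.mul ih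

lemma exists_hasBlockForm (hk : 0 < k) (φ : Perm (Fin n)) (τ : Fin n → Perm (Fin k)) :
    ∃ σ, HasBlockForm hk σ φ τ :=
  ⟨(blockEquiv hk).permCongr (Equiv.prodShear φ τ), fun i a => by
    simp [Equiv.permCongr_apply, Equiv.prodShear, blockEquiv]⟩

lemma HasBlockForm.isBlockPerm (h : HasBlockForm hk w φ τ) : IsBlockPerm k n w := by
  refine fun i => ⟨φ i, Finset.ext fun y => ?_⟩
  simp only [mem_image, mem_pk_iff (hk := hk)]
  constructor
  · rintro ⟨_, ⟨a, rfl⟩, rfl⟩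
    exact ⟨τ i a, (h i a).symm⟩
  · rintro ⟨b, rfl⟩
    exact ⟨_, ⟨(τ i).symm b, rfl⟩, by rw [h, Equiv.apply_symm_apply]⟩

lemma IsBlockPerm.div_apply_inBlock (hw : IsBlockPerm k n w) (hk : 0 < k) (i : Fin n) (a : Fin k) :
    (w (inBlock k n hk i a) : ℕ) / k = blockMap k n hk w i := by
  obtain ⟨j, hj⟩ := hw i
  have hdiv : ∀ x ∈ pk k n i, (w x : ℕ) / k = j := fun x hx => by
    have : w x ∈ pk k n j := hj ▸ mem_image_of_mem w hx
    simpa [pk] using this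
  have helem : elemIn k n hk i = inBlock k n hk i ⟨0, hk⟩ := Fin.ext (by simp [elemIn, inBlock])
  change (w (inBlock k n hk i a) : ℕ) / k = (w (elemIn k n hk i) : ℕ) / k
  rw [helem, hdiv _ (mem_pk_iff.mpr ⟨a, rfl⟩), hdiv _ (mem_pk_iff.mpr ⟨_, rfl⟩)]

lemma IsBlockPerm.pPerm_apply (hw : IsBlockPerm k n w) (hk : 0 < k) (i : Fin n) :
    pPerm k n hk w i = blockMap k n hk w i := by
  have hsurj : Function.Surjective (blockMap k n hk w) := fun l => by
    obtain ⟨⟨i, a⟩, hia⟩ := (blockEquiv hk).surjective (w⁻¹ (inBlock k n hk l ⟨0, hk⟩))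
    have hwia : w (inBlock k n hk i a) = inBlock k n hk l ⟨0, hk⟩ := by
      rw [show inBlock k n hk i a = _ from hia, Perm.inv_def, Equiv.apply_symm_apply]
    refine ⟨i, Fin.ext ?_⟩
    rw [← hw.div_apply_inBlock hk i a, hwia, inBlock_div]
  rw [pPerm, dif_pos (Finite.surjective_iff_bijective.mp hsurj)]
  rfl

/-- Junk value `1` unless `w` is a block permutation. -/
noncomputable def blockRes (hk : 0 < k) (w : Perm (Fin (k * n))) (i : Fin n) : Perm (Fin k) :=
  if h : Function.Bijective (fun a : Fin k =>
      (⟨(w (inBlock k n hk i a) : ℕ) % k, Nat.mod_lt _ hk⟩ : Fin k))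
  then Equiv.ofBijective _ h else 1

lemma IsBlockPerm.hasBlockForm (hw : IsBlockPerm k n w) (hk : 0 < k) :
    HasBlockForm hk w (pPerm k n hk w) (blockRes hk w) := by
  intro i
  have key : ∀ a, w (inBlock k n hk i a)
      = inBlock k n hk (pPerm k n hk w i) ⟨(w (inBlock k n hk i a) : ℕ) % k, Nat.mod_lt _ hk⟩ :=
    fun a => Fin.ext <| by
      change (w (inBlock k n hk i a) : ℕ)
        = (pPerm k n hk w i : ℕ) * k + (w (inBlock k n hk i a) : ℕ) % k
      rw [hw.pPerm_apply hk, ← hw.div_apply_inBlock hk i a, Nat.div_add_mod']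
  have hinj : Function.Injective (fun a : Fin k =>
      (⟨(w (inBlock k n hk i a) : ℕ) % k, Nat.mod_lt _ hk⟩ : Fin k)) := fun a b hab =>
    (inBlock_inj.mp (w.injective (by
      rw [key a, key b]; exact congrArg (inBlock k n hk (pPerm k n hk w i)) hab))).2
  intro a
  rw [blockRes, dif_pos (Finite.injective_iff_bijective.mp hinj)]
  exact key a

lemma HasBlockForm.pPerm_eq {φ : Perm (Fin n)} (h : HasBlockForm hk w φ τ) :
    pPerm k n hk w = φ :=
  Equiv.ext (congrFun ((h.isBlockPerm.hasBlockForm hk).unique h).1)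

lemma cycProd_eq_cycleProd (hw : IsBlockPerm k n w) (hk : 0 < k) (i : Fin n) :
    cycProd k n hk w i = cycleProd (pPerm k n hk w) (blockRes hk w) i := by
  have h := ((isBlockPerm_pow k n hw (cycLen (pPerm k n hk w) i)).hasBlockForm hk).unique
    ((hw.hasBlockForm hk).pow (cycLen (pPerm k n hk w) i))
  exact congrFun h.2 i

lemma HasBlockForm.mul_eq_mul_iff {w₁ w₂ : Perm (Fin (k * n))} {P₁ P₂ : Perm (Fin n)}
    {u₁ u₂ : Fin n → Perm (Fin k)} (hσ : HasBlockForm hk σ φ τ) (h₁ : HasBlockForm hk w₁ P₁ u₁)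
    (h₂ : HasBlockForm hk w₂ P₂ u₂) :
    σ * w₁ = w₂ * σ ↔
      Function.Semiconj φ P₁ P₂ ∧ ∀ i, τ (P₁ i) * u₁ i = u₂ (φ i) * τ i := by
  constructor
  · intro h
    have hform := hσ.mul h₁
    rw [h] at hform
    obtain ⟨hφ, hτ⟩ := hform.unique (h₂.mul hσ)
    exact ⟨congrFun hφ, congrFun hτ⟩
  · rintro ⟨hφ, hτ⟩
    have hform := hσ.mul h₁
    rw [show φ ∘ P₁ = P₂ ∘ φ from funext hφ, funext hτ] at hform
    exact hform.ext (h₂.mul hσ)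

end Blocks

section BlockTypes

variable {k n : ℕ}

/-- `Perm.partition` gives a partition of `Fintype.card (Fin k)` rather than of `k`. -/
def finPartition (g : Perm (Fin k)) : Nat.Partition k where
  parts := g.partition.parts
  parts_pos := g.partition.parts_pos
  parts_sum := by simpa using g.partition.parts_sum

lemma finPartition_eq_iff_isConj {g h : Perm (Fin k)} :
    finPartition g = finPartition h ↔ IsConj g h := by
  rw [Perm.partition_eq_of_isConj, Nat.Partition.ext_iff, Nat.Partition.ext_iff]
  rfl

lemma finPartition_one : finPartition (1 : Perm (Fin k)) = onePartition k :=
  Nat.Partition.ext (by simp [finPartition, onePartition, Perm.parts_partition])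

noncomputable def cycClass (hk : 0 < k) (w : Perm (Fin (k * n))) (i : Fin n) :
    ℕ × Nat.Partition k :=
  (cycLen (pPerm k n hk w) i, finPartition (cycProd k n hk w i))

open scoped Classical in
lemma count_tyFam (hk : 0 < k) (w : Perm (Fin (k * n))) (ρ : Nat.Partition k) (m : ℕ) :
    (tyFam k n hk w ρ).count m = #{i | IsRep (pPerm k n hk w) i ∧ cycClass hk w i = (m, ρ)} := by
  rw [tyFam, Multiset.count_map, ← Finset.filter_val, Finset.card_val, filter_filter]
  congr 1
  refine filter_congr fun i _ => ?_
  simp only [cycClass, Prod.mk.injEq, Nat.Partition.ext_iff, finPartition, IsRep]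
  tauto

variable {hk : 0 < k} {w w₁ w₂ : Perm (Fin (k * n))}

lemma cycClass_of_intertwine (hw₁ : IsBlockPerm k n w₁) (hw₂ : IsBlockPerm k n w₂)
    {φ : Fin n → Fin n} {τ : Fin n → Perm (Fin k)} (hφinj : Function.Injective φ)
    (hφ : Function.Semiconj φ (pPerm k n hk w₁) (pPerm k n hk w₂))
    (hτ : ∀ i, τ (pPerm k n hk w₁ i) * blockRes hk w₁ i = blockRes hk w₂ (φ i) * τ i)
    (i : Fin n) : cycClass hk w₂ (φ i) = cycClass hk w₁ i := by
  refine Prod.ext (cycLen_apply_of_semiconj hφinj hφ i) ?_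
  rw [cycClass, cycClass, cycProd_eq_cycleProd hw₁, cycProd_eq_cycleProd hw₂]
  exact (finPartition_eq_iff_isConj.mpr (isConj_cycleProd_of_intertwine hφinj hφ hτ i)).symm

lemma cycClass_apply (hw : IsBlockPerm k n w) (i : Fin n) :
    cycClass hk w (pPerm k n hk w i) = cycClass hk w i :=
  cycClass_of_intertwine hw hw (pPerm k n hk w).injective (fun _ => rfl) (fun _ => rfl) i

theorem tyFam_conj {σ : Perm (Fin (k * n))} (hσ : IsBlockPerm k n σ) (hw : IsBlockPerm k n w) :
    tyFam k n hk (σ * w * σ⁻¹) = tyFam k n hk w := by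
  have hw' : IsBlockPerm k n (σ * w * σ⁻¹) :=
    isBlockPerm_mul k n (isBlockPerm_mul k n hσ hw) ((Bgrp k n).inv_mem hσ)
  obtain ⟨hφ, hτ⟩ := ((hσ.hasBlockForm hk).mul_eq_mul_iff (hw.hasBlockForm hk)
    (hw'.hasBlockForm hk)).mp (by group)
  funext ρ
  refine Multiset.ext.mpr fun m => ?_
  rw [count_tyFam, count_tyFam]
  exact (card_isRep_eq_of_semiconj hφ (cycClass_of_intertwine hw hw' (pPerm k n hk σ).injective
    hφ hτ) (cycClass_apply hw) (cycClass_apply hw') _).symm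

end BlockTypes

section KPartialPermutations

variable {k n : ℕ} {d d₁ d₂ : Finset (Fin n)} {w w₁ w₂ : Perm (Fin (k * n))}

lemma IsKPP.apply_eq_of_notMem (hp : IsKPP k n (d, w)) (hk : 0 < k) {i : Fin n} (hi : i ∉ d) :
    pPerm k n hk w i = i ∧ blockRes hk w i = 1 := by
  have hfix : ∀ a, w (inBlock k n hk i a) = inBlock k n hk i a := fun a =>
    hp.2 _ fun ⟨j, hj, hdiv⟩ => hi (by
      rw [inBlock_div] at hdiv
      rwa [Fin.ext hdiv])
  have h := fun a => inBlock_inj.mp ((hp.1.hasBlockForm hk i a).symm.trans (hfix a))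
  exact ⟨(h ⟨0, hk⟩).1, Equiv.ext fun a => (h a).2⟩

lemma IsKPP.cycClass_of_notMem (hp : IsKPP k n (d, w)) (hk : 0 < k) {i : Fin n} (hi : i ∉ d) :
    IsRep (pPerm k n hk w) i ∧ cycClass hk w i = (1, onePartition k) := by
  obtain ⟨hP, hu⟩ := hp.apply_eq_of_notMem hk hi
  have hlen : cycLen (pPerm k n hk w) i = 1 := cycLen_eq_one_iff.mpr hP
  refine ⟨isRep_of_apply_eq_self hP, Prod.ext hlen ?_⟩
  rw [cycClass, cycProd_eq_cycleProd hp.1, cycleProd, hlen]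
  simp [pathProd, hu, finPartition_one]

open scoped Classical in
lemma IsKPP.card_isRep_notMem (hp : IsKPP k n (d, w)) (hk : 0 < k) (c : ℕ × Nat.Partition k) :
    #{i | IsRep (pPerm k n hk w) i ∧ cycClass hk w i = c ∧ i ∉ d}
      = if c = (1, onePartition k) then #dᶜ else 0 := by
  split_ifs with hc
  · congr 1
    ext i
    simp only [mem_filter, mem_univ, true_and, mem_compl]
    exact ⟨fun h => h.2.2, fun h => ⟨(hp.cycClass_of_notMem hk h).1,
      (hp.cycClass_of_notMem hk h).2.trans hc.symm, h⟩⟩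
  · refine card_eq_zero.mpr (filter_eq_empty_iff.mpr fun i _ ⟨_, hcl, hi⟩ => hc ?_)
    exact hcl ▸ (hp.cycClass_of_notMem hk hi).2

noncomputable def kppClass (hk : 0 < k) (d : Finset (Fin n)) (w : Perm (Fin (k * n)))
    (i : Fin n) : (ℕ × Nat.Partition k) × Bool :=
  (cycClass hk w i, decide (i ∈ d))

open scoped Classical in
/-- Blocks outside the support are trivial, so the type and the size of the support
determine how many cycles of each class meet the support. -/
lemma card_isRep_kppClass_eq (hk : 0 < k) (hp : IsKPP k n (d₁, w₁)) (hq : IsKPP k n (d₂, w₂))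
    (hcard : #d₁ = #d₂) (hty : ∀ ρ, tyFam k n hk w₁ ρ = tyFam k n hk w₂ ρ)
    (c : (ℕ × Nat.Partition k) × Bool) :
    #{i | IsRep (pPerm k n hk w₁) i ∧ kppClass hk d₁ w₁ i = c}
      = #{i | IsRep (pPerm k n hk w₂) i ∧ kppClass hk d₂ w₂ i = c} := by
  obtain ⟨⟨m, ρ⟩, b⟩ := c
  have hsplit : ∀ (d : Finset (Fin n)) (w : Perm (Fin (k * n))),
      #{i | IsRep (pPerm k n hk w) i ∧ cycClass hk w i = (m, ρ) ∧ i ∈ d}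
        + #{i | IsRep (pPerm k n hk w) i ∧ cycClass hk w i = (m, ρ) ∧ i ∉ d}
        = (tyFam k n hk w ρ).count m := fun d w => by
    rw [count_tyFam, ← card_filter_add_card_filter_not (fun i => i ∈ d)
      (s := {i | IsRep (pPerm k n hk w) i ∧ cycClass hk w i = (m, ρ)}), filter_filter,
      filter_filter]
    simp only [and_assoc]
  have hout : #{i | IsRep (pPerm k n hk w₁) i ∧ cycClass hk w₁ i = (m, ρ) ∧ i ∉ d₁}
      = #{i | IsRep (pPerm k n hk w₂) i ∧ cycClass hk w₂ i = (m, ρ) ∧ i ∉ d₂} := by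
    rw [hp.card_isRep_notMem, hq.card_isRep_notMem, card_compl, card_compl, hcard]
  have hin : #{i | IsRep (pPerm k n hk w₁) i ∧ cycClass hk w₁ i = (m, ρ) ∧ i ∈ d₁}
      = #{i | IsRep (pPerm k n hk w₂) i ∧ cycClass hk w₂ i = (m, ρ) ∧ i ∈ d₂} := by
    have h₁ := hsplit d₁ w₁
    have h₂ := hsplit d₂ w₂
    rw [hty] at h₁
    omega
  cases b
  · simpa [kppClass, and_assoc] using hout
  · simpa [kppClass, and_assoc] using hin

theorem exists_blockPerm_act_eq (hk : 0 < k) (hp : IsKPP k n (d₁, w₁))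
    (hq : IsKPP k n (d₂, w₂)) (hcard : #d₁ = #d₂)
    (hty : ∀ ρ, tyFam k n hk w₁ ρ = tyFam k n hk w₂ ρ) :
    ∃ σ, IsBlockPerm k n σ ∧ actKPP k n hk σ (d₁, w₁) = (d₂, w₂) := by
  classical
  obtain ⟨ψ, hψ⟩ := exists_equiv_subtype_of_card_eq (card_isRep_kppClass_eq hk hp hq hcard hty)
  have hcls : ∀ r, cycClass hk w₂ (ψ r) = cycClass hk w₁ r := fun r => congrArg Prod.fst (hψ r)
  obtain ⟨φ, τ, hφ, hτ, hφψ⟩ := exists_intertwine_of_cycleMatching (u₁ := blockRes hk w₁)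
    (u₂ := blockRes hk w₂) ψ.injective (fun r => congrArg Prod.fst (hcls r)) fun r => by
      rw [← cycProd_eq_cycleProd hp.1, ← cycProd_eq_cycleProd hq.1,
        ← finPartition_eq_iff_isConj]
      exact (congrArg Prod.snd (hcls r)).symm
  obtain ⟨σ, hσ⟩ := exists_hasBlockForm hk φ τ
  refine ⟨σ, hσ.isBlockPerm, Prod.ext ?_ ?_⟩
  · -- a block outside `d₁` is a trivial cycle, which `ψ` sends outside `d₂`
    have hout : ∀ i ∉ d₁, φ i ∉ d₂ := fun i hi => by
      obtain ⟨hrep, -⟩ := hp.cycClass_of_notMem hk hi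
      have hmem := congrArg Prod.snd (hψ ⟨i, hrep⟩)
      simp only [kppClass, hi, decide_false, decide_eq_false_iff_not] at hmem
      rwa [← hφψ ⟨i, hrep⟩] at hmem
    simp only [actKPP, hσ.pPerm_eq]
    refine (eq_of_subset_of_card_le (fun j hj => mem_image.mpr ⟨φ⁻¹ j, ?_, by simp⟩)
      (by rw [card_image_of_injective _ φ.injective, hcard])).symm
    by_contra h
    exact hout _ h (by simpa using hj)
  · rw [actKPP, mul_inv_eq_iff_eq_mul]
    exact (hσ.mul_eq_mul_iff (hp.1.hasBlockForm hk) (hq.1.hasBlockForm hk)).mpr ⟨hφ, hτ⟩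

end KPartialPermutations

/-- Two `k`-partial permutations are in the same orbit of the action of `B_{kn}^k` iff
their supports have the same size and their permutations have the same type. -/
theorem KPP_orbit_iff (k n : ℕ) (hk : 0 < k) (p q : KPP k n) :
    (∃ σ : Perm (Fin (k * n)), IsBlockPerm k n σ ∧ actKPP k n hk σ p.val = q.val) ↔
      (p.val.1.card = q.val.1.card ∧
        ∀ ρ : Nat.Partition k, tyFam k n hk p.val.2 ρ = tyFam k n hk q.val.2 ρ) := by
  obtain ⟨⟨d₁, w₁⟩, hp⟩ := p
  obtain ⟨⟨d₂, w₂⟩, hq⟩ := q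
  constructor
  · rintro ⟨σ, hσ, hact⟩
    simp only [actKPP, Prod.mk.injEq] at hact
    obtain ⟨rfl, rfl⟩ := hact
    exact ⟨(card_image_of_injective _ (pPerm k n hk σ).injective).symm,
      fun ρ => (congrFun (tyFam_conj hσ hp.1) ρ).symm⟩
  · rintro ⟨hcard, hty⟩
    exact exists_blockPerm_act_eq hk hp hq hcard hty

end KWr
end

section
/- If two k-partial permutations (d₁,ω₁), (d₂,ω₂) have product (d₁∪d₂, ω₁ω₂), and for a k-partial permutation (d,ω) one defines deg₁(d,ω) to be the number of blocks of d plus the number of blocks of d on which ω acts as the identity, then deg₁(d₁∪d₂, ω₁ω₂) ≤ deg₁(d₁,ω₁) + deg₁(d₂,ω₂). -/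
open Equiv Finset

namespace KWr

def FixesBlock (k n : ℕ) (w : Perm (Fin (k * n))) (i : Fin n) : Prop :=
  ∀ x : Fin (k * n), (x : ℕ) / k = (i : ℕ) → w x = x

instance (k n : ℕ) (w : Perm (Fin (k * n))) : DecidablePred (FixesBlock k n w) :=
  fun _ => inferInstanceAs (Decidable (∀ _, _))

section

variable {k n : ℕ}

theorem deg1_eq (pr : Finset (Fin n) × Perm (Fin (k * n))) :
    deg1 k n pr = pr.1.card + (pr.1.filter (FixesBlock k n pr.2)).card :=
  rfl

theorem IsKPP.fixesBlock_of_notMem {pr : Finset (Fin n) × Perm (Fin (k * n))}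
    (hpr : IsKPP k n pr) {i : Fin n} (hi : i ∉ pr.1) : FixesBlock k n pr.2 i := by
  intro x hx
  refine hpr.2 x ?_
  rintro ⟨j, hj, hxj⟩
  exact hi (Fin.ext (hx ▸ hxj) ▸ hj)

theorem FixesBlock.of_mul_of_right {a b : Perm (Fin (k * n))} {i : Fin n}
    (hab : FixesBlock k n (a * b) i) (hb : FixesBlock k n b i) : FixesBlock k n a i := by
  intro x hx
  simpa [hb x hx] using hab x hx

theorem FixesBlock.of_mul_of_left {a b : Perm (Fin (k * n))} {i : Fin n}
    (hab : FixesBlock k n (a * b) i) (ha : FixesBlock k n a i) : FixesBlock k n b i := by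
  intro x hx
  exact a.injective ((hab x hx).trans (ha x hx).symm)

/-- A block of `d₁ ∪ d₂` fixed by `ω₁ω₂` that lies in only one of `d₁`, `d₂` is fixed by the
factor whose support contains it, because the other factor fixes it. With
`|d₁ ∪ d₂| + |d₁ ∩ d₂| = |d₁| + |d₂|` this gives the subadditivity of `deg1`. -/
theorem filter_fixesBlock_mul_subset (p q : KPP k n) :
    (p.val.1 ∪ q.val.1).filter (FixesBlock k n (p.val.2 * q.val.2)) ⊆
      p.val.1.filter (FixesBlock k n p.val.2) ∪ q.val.1.filter (FixesBlock k n q.val.2) ∪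
        (p.val.1 ∩ q.val.1) := by
  intro i hi
  obtain ⟨hpq, hfix⟩ := mem_filter.1 hi
  simp only [mem_union, mem_filter, mem_inter]
  by_cases hp : i ∈ p.val.1 <;> by_cases hq : i ∈ q.val.1
  · exact .inr ⟨hp, hq⟩
  · exact .inl (.inl ⟨hp, hfix.of_mul_of_right (q.property.fixesBlock_of_notMem hq)⟩)
  · exact .inl (.inr ⟨hq, hfix.of_mul_of_left (p.property.fixesBlock_of_notMem hp)⟩)
  · exact absurd hpq (by simp [hp, hq])

end

theorem deg1_subadditive_general (k n : ℕ) (p q : KPP k n) :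
    deg1 k n (p.val.1 ∪ q.val.1, p.val.2 * q.val.2) ≤ deg1 k n p.val + deg1 k n q.val := by
  have hfix := card_le_card (filter_fixesBlock_mul_subset p q)
  have hunion := card_union_le (p.val.1.filter (FixesBlock k n p.val.2))
    (q.val.1.filter (FixesBlock k n q.val.2))
  have hinter := card_union_add_card_inter p.val.1 q.val.1
  have hcover := card_union_le (p.val.1.filter (FixesBlock k n p.val.2) ∪
    q.val.1.filter (FixesBlock k n q.val.2)) (p.val.1 ∩ q.val.1)
  rw [deg1_eq, deg1_eq, deg1_eq]
  dsimp only
  omega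

/-- `deg₁` (number of blocks of the support plus number of blocks on which the
permutation acts as the identity) is subadditive for the product of `k`-partial
permutations, hence a filtration. -/
theorem deg1_subadditive (k n : ℕ) (hk : 0 < k) (p q : KPP k n) :
    deg1 k n (p.val.1 ∪ q.val.1, p.val.2 * q.val.2) ≤ deg1 k n p.val + deg1 k n q.val :=
  deg1_subadditive_general k n p q

end KWr
end

section
/- In the center of the group algebra of S_n (n ≥ 5): C_{(1^{n−2},2)} · C_{(1^{n−3},3)} = 2(n−2) C_{(1^{n−2},2)} + 4 C_{(1^{n−4},4)} + C_{(1^{n−5},2,3)}. -/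
/-! Comparing coefficients at `g`, the left side counts the transpositions `σ` for which
`σ⁻¹ g` is a 3-cycle. Then `g` is odd and moves at most five points, so its cycle type is
`(2)`, `(4)` or `(2,3)`. For `g = (a b)` these `σ` are the `(x c)` with `c ∈ {a, b}` and
`x ∉ {a, b}`, which gives `2(n-2)`; for a 4-cycle they are the four `(v g(v))`; for `g` of
type `(2,3)` the 3-cycle `σ⁻¹ g` must be disjoint from `σ`, so `σ` is the 2-cycle of `g`. -/

open Equiv Finset

namespace MonoidAlgebra
variable {k G : Type*} [Semiring k] [DecidableEq G]

theorem coeff_sum_of [Monoid G] (s : Finset G) (g : G) :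
    (∑ x ∈ s, of k G x).coeff g = if g ∈ s then 1 else 0 := by
  simp [coeff_sum, Finsupp.single_apply]

theorem coeff_sum_of_mul_sum_of [Group G] (s t : Finset G) (g : G) :
    ((∑ x ∈ s, of k G x) * ∑ y ∈ t, of k G y).coeff g = #{x ∈ s | x⁻¹ * g ∈ t} := by
  have coeff_of_mul (x : G) :
      (of k G x * ∑ y ∈ t, of k G y).coeff g = if x⁻¹ * g ∈ t then 1 else 0 := by
    rw [of_apply, coeff_single_mul_apply, one_mul, coeff_sum_of]
  simp only [Finset.sum_mul, coeff_sum, Finset.sum_apply', coeff_of_mul, Finset.sum_boole]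

end MonoidAlgebra

namespace Equiv.Perm
variable {α : Type*} [Fintype α] [DecidableEq α]

theorem partition_parts_eq_replicate_add_iff {σ : Perm α} {m : Multiset ℕ}
    (hm : ∀ a ∈ m, 2 ≤ a) :
    σ.partition.parts = Multiset.replicate (Fintype.card α - m.sum) 1 + m ↔
      σ.cycleType = m := by
  refine ⟨fun h => ?_, fun h => by rw [parts_partition, ← sum_cycleType, h, add_comm]⟩
  rw [← filter_parts_partition_eq_cycleType, h, Multiset.filter_add,
    Multiset.filter_eq_self.2 hm, Multiset.filter_eq_nil.2 fun a ha => ?_, zero_add]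
  rw [Multiset.eq_of_mem_replicate ha]
  omega

open scoped Classical in
noncomputable def swapThreeCycleFactors (g : Perm α) : Finset (Perm α) :=
  {σ | σ.IsSwap ∧ (σ⁻¹ * g).IsThreeCycle}

theorem cycleType_swap_mul_of_isThreeCycle {σ τ : Perm α} (hσ : σ.IsSwap)
    (hτ : τ.IsThreeCycle) :
    (σ * τ).cycleType = {2} ∨ (σ * τ).cycleType = {4} ∨ (σ * τ).cycleType = {2, 3} := by
  have two_le : ∀ a ∈ (σ * τ).cycleType, 2 ≤ a := fun _ => two_le_of_mem_cycleType
  have sum_le : (σ * τ).cycleType.sum ≤ 5 := by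
    rw [sum_cycleType]
    calc #(σ * τ).support ≤ #(σ.support ∪ τ.support) := card_le_card (support_mul_le σ τ)
      _ ≤ #σ.support + #τ.support := card_union_le _ _
      _ = 5 := by rw [card_support_eq_two.2 hσ, hτ.card_support]
  have odd : Odd ((σ * τ).cycleType.sum + Multiset.card (σ * τ).cycleType) := by
    have h := sign_of_cycleType (σ * τ)
    rwa [sign_mul, hσ.sign_eq, hτ.sign, mul_one, eq_comm,
      neg_one_pow_eq_neg_one_iff_odd (by decide)] at h
  generalize (σ * τ).cycleType = m at *
  have card_le : Multiset.card m * 2 ≤ m.sum := by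
    simpa using Multiset.card_nsmul_le_sum two_le
  obtain ⟨k, hk⟩ := odd
  obtain hc | hc | hc : Multiset.card m = 0 ∨ Multiset.card m = 1 ∨ Multiset.card m = 2 := by
    omega
  · simp [Multiset.card_eq_zero.1 hc] at hk
  · obtain ⟨a, rfl⟩ := Multiset.card_eq_one.1 hc
    simp only [Multiset.sum_singleton, Multiset.card_singleton] at sum_le hk card_le
    obtain rfl | rfl : a = 2 ∨ a = 4 := by omega
    exacts [Or.inl rfl, Or.inr (Or.inl rfl)]
  · obtain ⟨a, b, rfl⟩ := Multiset.card_eq_two.1 hc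
    have ha := two_le a (by simp)
    have hb := two_le b (by simp)
    simp only [Multiset.insert_eq_cons, Multiset.sum_cons, Multiset.sum_singleton,
      Multiset.card_cons, Multiset.card_singleton] at sum_le hk
    obtain ⟨rfl, rfl⟩ | ⟨rfl, rfl⟩ : a = 2 ∧ b = 3 ∨ a = 3 ∧ b = 2 := by omega
    exacts [Or.inr (Or.inr rfl), Or.inr (Or.inr (Multiset.pair_comm 3 2))]

theorem swapThreeCycleFactors_eq_empty {g : Perm α}
    (hg : ¬(g.cycleType = {2} ∨ g.cycleType = {4} ∨ g.cycleType = {2, 3})) :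
    swapThreeCycleFactors g = ∅ := by
  refine eq_empty_of_forall_notMem fun σ hσ => hg ?_
  simp only [swapThreeCycleFactors, mem_filter, mem_univ, true_and] at hσ
  simpa using cycleType_swap_mul_of_isThreeCycle hσ.1 hσ.2

theorem swapThreeCycleFactors_swap {a b : α} (hab : a ≠ b) :
    swapThreeCycleFactors (swap a b) =
      ((univ \ {a, b}) ×ˢ {a, b}).image fun p => swap p.1 p.2 := by
  ext σ
  simp only [swapThreeCycleFactors, mem_filter, mem_univ, true_and, mem_image, mem_product,
    mem_sdiff, mem_insert, mem_singleton, Prod.exists]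
  constructor
  · rintro ⟨⟨x, y, hxy, rfl⟩, hτ⟩
    rw [swap_inv] at hτ
    have hne : ¬(x = a ∧ y = b) ∧ ¬(x = b ∧ y = a) := by
      refine ⟨?_, ?_⟩ <;> rintro ⟨rfl, rfl⟩ <;> apply hτ.ne_one
      exacts [swap_mul_self x y, by rw [swap_comm, swap_mul_self]]
    have hmeet : x = a ∨ x = b ∨ y = a ∨ y = b := by
      by_contra! h
      have hdisj : (swap x y).Disjoint (swap a b) := by
        rw [disjoint_iff_disjoint_support, support_swap hxy, support_swap hab]
        simp only [disjoint_insert_left, disjoint_insert_right, disjoint_singleton, mem_insert,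
          mem_singleton]
        grind
      have h3 := hτ.cycleType
      rw [hdisj.cycleType_mul, isSwap_iff_cycleType.1 ⟨x, y, hxy, rfl⟩,
        isSwap_iff_cycleType.1 ⟨a, b, hab, rfl⟩] at h3
      exact absurd h3 (by decide)
    rcases hmeet with rfl | rfl | rfl | rfl
    · exact ⟨y, x, by grind, swap_comm y x⟩
    · exact ⟨y, x, by grind, swap_comm y x⟩
    · exact ⟨x, y, by grind, rfl⟩
    · exact ⟨x, y, by grind, rfl⟩
  · rintro ⟨z, c, ⟨hz, rfl | rfl⟩, rfl⟩
    · refine ⟨⟨z, _, by grind, rfl⟩, ?_⟩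
      rw [swap_inv, swap_comm]
      exact isThreeCycle_swap_mul_swap_same (by grind) hab (by grind)
    · refine ⟨⟨z, _, by grind, rfl⟩, ?_⟩
      rw [swap_inv, swap_comm, swap_comm a]
      exact isThreeCycle_swap_mul_swap_same (by grind) hab.symm (by grind)

theorem card_swapThreeCycleFactors_swap {a b : α} (hab : a ≠ b) :
    #(swapThreeCycleFactors (swap a b)) = 2 * (Fintype.card α - 2) := by
  rw [swapThreeCycleFactors_swap hab, card_image_of_injOn, card_product,
    card_sdiff_of_subset (subset_univ _), card_univ, card_pair hab, mul_comm]
  rintro ⟨z, c⟩ hzc ⟨z', c'⟩ hzc' (h : swap z c = swap z' c')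
  simp only [coe_product, coe_sdiff, coe_univ, Set.mem_prod, Set.mem_sdiff, Set.mem_univ,
    true_and, mem_coe, mem_insert, mem_singleton] at hzc hzc'
  have hsupp := congrArg support h
  rw [support_swap (by grind), support_swap (by grind)] at hsupp
  have hz : z ∈ ({z', c'} : Finset α) := hsupp ▸ mem_insert_self z {c}
  have hc : c ∈ ({z', c'} : Finset α) := hsupp ▸ mem_insert_of_mem (mem_singleton_self c)
  simp only [mem_insert, mem_singleton] at hz hc
  grind

theorem apply_eq_of_notMem_support_swap_mul {g : Perm α} {x y : α}
    (hx : x ∉ (swap x y * g).support) : g x = y := by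
  rwa [notMem_support, mul_apply, swap_apply_eq_iff, swap_apply_left] at hx

theorem apply_apply_ne_of_cycleType_eq_four {g : Perm α} (hg : g.cycleType = {4}) {v : α}
    (hv : v ∈ g.support) : g (g v) ≠ v := by
  have hcycle : g.IsCycle := card_cycleType_eq_one.1 (by rw [hg]; rfl)
  intro h
  have hsq : g ^ 2 = 1 := (hcycle.pow_eq_one_iff' (mem_support.1 hv)).2 (by rwa [sq, mul_apply])
  have hdvd := orderOf_dvd_of_pow_eq_one hsq
  rw [hcycle.orderOf, ← sum_cycleType, hg] at hdvd
  norm_num at hdvd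

theorem swapThreeCycleFactors_eq_image_of_cycleType_eq_four {g : Perm α}
    (hg : g.cycleType = {4}) :
    swapThreeCycleFactors g = g.support.image fun v => swap v (g v) := by
  ext σ
  simp only [swapThreeCycleFactors, mem_filter, mem_univ, true_and, mem_image]
  constructor
  · rintro ⟨⟨x, y, hxy, rfl⟩, hτ⟩
    rw [swap_inv] at hτ
    by_cases hx : x ∈ (swap x y * g).support
    · by_cases hy : y ∈ (swap x y * g).support
      · have hsub : g.support ⊆ (swap x y * g).support := by
          calc g.support = (swap x y * (swap x y * g)).support := by rw [swap_mul_self_mul]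
            _ ⊆ (swap x y).support ∪ (swap x y * g).support := support_mul_le _ _
            _ ⊆ (swap x y * g).support := by
              rw [support_swap hxy, union_subset_iff, insert_subset_iff, singleton_subset_iff]
              exact ⟨⟨hx, hy⟩, subset_rfl⟩
        have hcard := card_le_card hsub
        rw [← sum_cycleType, hg, hτ.card_support] at hcard
        norm_num at hcard
      · rw [swap_comm] at hy hτ ⊢
        have hgy := apply_eq_of_notMem_support_swap_mul hy
        exact ⟨y, by rw [mem_support, hgy]; exact hxy, by rw [hgy]⟩
    · have hgx := apply_eq_of_notMem_support_swap_mul hx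
      exact ⟨x, by rw [mem_support, hgx]; exact hxy.symm, by rw [hgx]⟩
  · rintro ⟨v, hv, rfl⟩
    refine ⟨⟨v, g v, (mem_support.1 hv).symm, rfl⟩, ?_⟩
    rw [swap_inv, ← card_support_eq_three_iff,
      support_swap_mul_eq _ _ (apply_apply_ne_of_cycleType_eq_four hg hv),
      sdiff_singleton_eq_erase, card_erase_of_mem hv, ← sum_cycleType, hg]
    rfl

theorem card_swapThreeCycleFactors_of_cycleType_eq_four {g : Perm α}
    (hg : g.cycleType = {4}) : #(swapThreeCycleFactors g) = 4 := by
  rw [swapThreeCycleFactors_eq_image_of_cycleType_eq_four hg, card_image_of_injOn,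
    ← sum_cycleType, hg, Multiset.sum_singleton]
  intro v hv w hw (h : swap v (g v) = swap w (g w))
  by_contra hne
  have hgv : g v = swap w (g w) v := by rw [← h, swap_apply_left]
  by_cases hvw : v = g w
  · rw [hvw, swap_apply_right] at hgv
    exact apply_apply_ne_of_cycleType_eq_four hg hw (hvw ▸ hgv)
  · rw [swap_apply_of_ne_of_ne hne hvw] at hgv
    exact mem_support.1 hv hgv

theorem disjoint_of_card_support_add_le_card_support_mul {σ τ : Perm α}
    (h : #σ.support + #τ.support ≤ #(σ * τ).support) : σ.Disjoint τ := by
  rw [disjoint_iff_disjoint_support, ← card_union_eq_card_add_card]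
  exact le_antisymm (card_union_le _ _) (h.trans (card_le_card (support_mul_le σ τ)))

theorem mem_swapThreeCycleFactors_iff_of_cycleType_eq_two_three {g σ : Perm α}
    (hg : g.cycleType = {2, 3}) :
    σ ∈ swapThreeCycleFactors g ↔ σ ∈ g.cycleFactorsFinset ∧ σ.IsSwap := by
  simp only [swapThreeCycleFactors, mem_filter, mem_univ, true_and]
  constructor
  · rintro ⟨hσ, hτ⟩
    have hd : σ.Disjoint (σ⁻¹ * g) := by
      apply disjoint_of_card_support_add_le_card_support_mul
      rw [mul_inv_cancel_left, ← sum_cycleType g, hg, card_support_eq_two.2 hσ,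
        hτ.card_support]
      rfl
    refine ⟨?_, hσ⟩
    rw [← mul_inv_cancel_left σ g, hd.cycleFactorsFinset_mul_eq_union,
      hσ.isCycle.cycleFactorsFinset_eq_singleton]
    exact mem_union_left _ (mem_singleton_self σ)
  · rintro ⟨hσg, hσ⟩
    refine ⟨hσ, ?_⟩
    rw [IsThreeCycle, (self_mem_cycle_factors_commute hσg).inv_left.eq,
      cycleType_mul_inv_mem_cycleFactorsFinset_eq_sub hσg, hg, isSwap_iff_cycleType.1 hσ]
    decide

theorem card_swapThreeCycleFactors_of_cycleType_eq_two_three {g : Perm α}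
    (hg : g.cycleType = {2, 3}) : #(swapThreeCycleFactors g) = 1 := by
  have hfactors : swapThreeCycleFactors g = {c ∈ g.cycleFactorsFinset | 2 = #c.support} := by
    ext σ
    rw [mem_swapThreeCycleFactors_iff_of_cycleType_eq_two_three hg, mem_filter, eq_comm,
      card_support_eq_two]
  have hcount := congrArg (Multiset.count 2) (cycleType_def g)
  rw [hg, Multiset.count_map] at hcount
  rw [hfactors, card_def, filter_val]
  simpa using hcount.symm

end Equiv.Perm

namespace KWr

open MonoidAlgebra Equiv.Perm

theorem CS_replicate_add (n : ℕ) {m : Multiset ℕ} {k : ℕ} (hm : ∀ a ∈ m, 2 ≤ a)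
    (hk : m.sum = k) :
    CS n (Multiset.replicate (n - k) 1 + m) =
      ∑ σ : Perm (Fin n) with σ.cycleType = m, of ℂ (Perm (Fin n)) σ := by
  subst hk
  refine sum_congr (filter_congr fun σ _ => ?_) fun _ _ => rfl
  simpa using partition_parts_eq_replicate_add_iff (σ := σ) hm

theorem coeff_CS_replicate_add {n : ℕ} {m : Multiset ℕ} {k : ℕ} (hm : ∀ a ∈ m, 2 ≤ a)
    (hk : m.sum = k) (g : Perm (Fin n)) :
    (CS n (Multiset.replicate (n - k) 1 + m)).coeff g = if g.cycleType = m then 1 else 0 := by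
  rw [CS_replicate_add n hm hk, coeff_sum_of]
  simp

theorem coeff_CS_two_mul_CS_three {n : ℕ} (g : Perm (Fin n)) :
    (CS n (Multiset.replicate (n - 2) 1 + {2}) *
      CS n (Multiset.replicate (n - 3) 1 + {3})).coeff g = #(swapThreeCycleFactors g) := by
  rw [CS_replicate_add n (by simp) (Multiset.sum_singleton 2),
    CS_replicate_add n (by simp) (Multiset.sum_singleton 3), coeff_sum_of_mul_sum_of,
    filter_filter]
  congr 2
  ext σ
  simp [swapThreeCycleFactors, isSwap_iff_cycleType, IsThreeCycle]

theorem classSum_two_three_general (n : ℕ) :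
    CS n (Multiset.replicate (n - 2) 1 + {2}) * CS n (Multiset.replicate (n - 3) 1 + {3}) =
      (2 * ((n : ℂ) - 2)) • CS n (Multiset.replicate (n - 2) 1 + {2}) +
      (4 : ℂ) • CS n (Multiset.replicate (n - 4) 1 + {4}) +
      CS n (Multiset.replicate (n - 5) 1 + {2, 3}) := by
  refine MonoidAlgebra.ext (Finsupp.ext fun g => ?_)
  rw [coeff_add, coeff_add, coeff_smul, coeff_smul, Finsupp.add_apply, Finsupp.add_apply,
    Finsupp.smul_apply, Finsupp.smul_apply, coeff_CS_two_mul_CS_three,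
    coeff_CS_replicate_add (by simp) (Multiset.sum_singleton 2),
    coeff_CS_replicate_add (by simp) (Multiset.sum_singleton 4),
    coeff_CS_replicate_add (by simp) (by rfl : ({2, 3} : Multiset ℕ).sum = 5)]
  by_cases hg : g.cycleType = {2} ∨ g.cycleType = {4} ∨ g.cycleType = {2, 3}
  · rcases hg with hg | hg | hg
    · obtain ⟨a, b, hab, rfl⟩ := isSwap_iff_cycleType.2 hg
      have two_le : 2 ≤ n := by
        simpa [card_support_swap hab] using card_le_univ (swap a b).support
      rw [card_swapThreeCycleFactors_swap hab, Fintype.card_fin, hg]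
      simp +decide [Nat.cast_sub two_le]
    · rw [card_swapThreeCycleFactors_of_cycleType_eq_four hg]
      simp [hg]
    · rw [card_swapThreeCycleFactors_of_cycleType_eq_two_three hg]
      simp +decide [hg]
  · rw [swapThreeCycleFactors_eq_empty hg]
    simp_all

/-- In `Z(ℂ[S_n])` for `n ≥ 5`:
`C_{(1^{n-2},2)} C_{(1^{n-3},3)} = 2(n-2) C_{(1^{n-2},2)} + 4 C_{(1^{n-4},4)} + C_{(1^{n-5},2,3)}`. -/
theorem classSum_two_three (n : ℕ) (hn : 5 ≤ n) :
    CS n (Multiset.replicate (n - 2) 1 + {2}) * CS n (Multiset.replicate (n - 3) 1 + {3}) =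
      (2 * ((n : ℂ) - 2)) • CS n (Multiset.replicate (n - 2) 1 + {2}) +
      (4 : ℂ) • CS n (Multiset.replicate (n - 4) 1 + {4}) +
      CS n (Multiset.replicate (n - 5) 1 + {2, 3}) :=
  classSum_two_three_general n

end KWr
end

section
/- Let Λ, Δ, Γ be families of partitions indexed by partitions of k and let c_{ΛΔ}^Γ be the number of pairs ((d₁,ω₁),(d₂,ω₂)) of k-partial permutations of type Λ and Δ respectively whose product equals a fixed k-partial permutation of type Γ with support k|Γ|. If c_{ΛΔ}^Γ ≠ 0 then max(|Λ|,|Δ|) ≤ |Γ| ≤ |Λ|+|Δ|. -/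
open Equiv Finset

namespace KWr

theorem max_card_le_card_union_and_card_union_le {α : Type*} [DecidableEq α]
    (s t : Finset α) : max #s #t ≤ #(s ∪ t) ∧ #(s ∪ t) ≤ #s + #t :=
  ⟨max_le (card_le_card subset_union_left) (card_le_card subset_union_right), card_union_le s t⟩

theorem structure_coeff_support_general (k n : ℕ) (hk : 0 < k)
    (Λ Δ Γ : Nat.Partition k → Multiset ℕ)
    (r : KPP k n) (hr : HasTypeKPP k n hk r Γ)
    (hne : Nat.card {pq : KPP k n × KPP k n //
        HasTypeKPP k n hk pq.1 Λ ∧ HasTypeKPP k n hk pq.2 Δ ∧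
        pq.1.val.1 ∪ pq.2.val.1 = r.val.1 ∧ pq.1.val.2 * pq.2.val.2 = r.val.2} ≠ 0) :
    max (famSize k Λ) (famSize k Δ) ≤ famSize k Γ ∧
      famSize k Γ ≤ famSize k Λ + famSize k Δ := by
  obtain ⟨⟨⟨p, q⟩, hpΛ, hqΔ, hunion, -⟩⟩ := (Nat.card_ne_zero.mp hne).1
  -- `|Λ|` counts the support blocks, and the supports of the factors have union that of `r`.
  rw [← hr.1, ← hpΛ.1, ← hqΔ.1, ← hunion]
  exact max_card_le_card_union_and_card_union_le _ _

/-- If the structure coefficient `c_{ΛΔ}^Γ` is nonzero, i.e. there is a pair of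
`k`-partial permutations of types `Λ` and `Δ` whose product is a fixed `k`-partial
permutation of type `Γ` with support of `|Γ|` blocks, then
`max(|Λ|, |Δ|) ≤ |Γ| ≤ |Λ| + |Δ|`. -/
theorem structure_coeff_support (k n : ℕ) (hk : 0 < k)
    (Λ Δ Γ : Nat.Partition k → Multiset ℕ)
    (hΛ : ∀ ρ, ∀ x ∈ Λ ρ, 0 < x) (hΔ : ∀ ρ, ∀ x ∈ Δ ρ, 0 < x) (hΓ : ∀ ρ, ∀ x ∈ Γ ρ, 0 < x)
    (r : KPP k n) (hr : HasTypeKPP k n hk r Γ)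
    (hne : Nat.card {pq : KPP k n × KPP k n //
        HasTypeKPP k n hk pq.1 Λ ∧ HasTypeKPP k n hk pq.2 Δ ∧
        pq.1.val.1 ∪ pq.2.val.1 = r.val.1 ∧ pq.1.val.2 * pq.2.val.2 = r.val.2} ≠ 0) :
    max (famSize k Λ) (famSize k Δ) ≤ famSize k Γ ∧
      famSize k Γ ≤ famSize k Λ + famSize k Δ :=
  structure_coeff_support_general k n hk Λ Δ Γ r hr hne

end KWr
end

section
/- For partitions ρ of n, λ of k and a permutation ω ∈ B_{kn}^k, one has ⋃_{ρ⊢k} ω(ρ) = ct(p_ω) (as a partition of n) and ∑_{ρ⊢k}|ω(ρ)| = n, where p_ω ∈ S_n is the induced block permutation and ct denotes cycle type. -/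
/-! Each cycle of `p_ω` lands in exactly one component `ω(ρ)`, namely the one indexed by the cycle
type of its cycle product, and contributes its length there once, read off at its least element.
The lengths of the cycles of a permutation, one per cycle and fixed points included, are its
cycle type. -/

open Equiv Finset

namespace Equiv.Perm

variable {α : Type*} [Fintype α] [LinearOrder α] (p : Perm α)

open scoped Classical in
def cycleMins : Finset α := {i | ∀ j, p.SameCycle i j → i ≤ j}

variable {p}

@[simp]
theorem mem_cycleMins {i : α} : i ∈ p.cycleMins ↔ ∀ j, p.SameCycle i j → i ≤ j := by
  simp [cycleMins]

theorem eq_of_mem_cycleMins_of_sameCycle {i j : α} (hi : i ∈ p.cycleMins)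
    (hj : j ∈ p.cycleMins) (hij : p.SameCycle i j) : i = j :=
  le_antisymm (mem_cycleMins.1 hi j hij) (mem_cycleMins.1 hj i hij.symm)

theorem minimalPeriod_eq_card_support_cycleOf {x : α} (hx : x ∈ p.support) :
    Function.minimalPeriod p x = #(p.cycleOf x).support := by
  have hxc : x ∈ (p.cycleOf x).support := mem_support_cycleOf_iff.2 ⟨.refl _ _, hx⟩
  refine Nat.dvd_right_iff_eq.1 fun m => ?_
  rw [← Function.isPeriodicPt_iff_minimalPeriod_dvd, Function.IsPeriodicPt,
    Function.IsFixedPt, iterate_eq_pow, (p.isCycleOn_support_cycleOf x).pow_apply_eq hxc]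

theorem filter_notMem_support_cycleMins :
    p.cycleMins.filter (· ∉ p.support) = p.supportᶜ := by
  ext i
  simp only [mem_filter, mem_compl, and_iff_right_iff_imp, mem_cycleMins, notMem_support]
  rintro hi j ⟨m, rfl⟩
  rw [zpow_apply_eq_self_of_apply_eq_self hi]

theorem image_cycleOf_filter_mem_support_cycleMins :
    (p.cycleMins.filter (· ∈ p.support)).image p.cycleOf = p.cycleFactorsFinset := by
  ext c
  simp only [mem_image, mem_filter]
  constructor
  · rintro ⟨i, ⟨-, hi⟩, rfl⟩
    exact cycleOf_mem_cycleFactorsFinset_iff.2 hi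
  · intro hc
    have hne : c.support.Nonempty := (mem_cycleFactorsFinset_iff.1 hc).1.nonempty_support
    set x := c.support.min' hne
    have hxc : x ∈ c.support := c.support.min'_mem hne
    have hcx : c = p.cycleOf x := cycle_is_cycleOf hxc hc
    have hxp : x ∈ p.support := mem_cycleFactorsFinset_support_le hc hxc
    refine ⟨x, ⟨mem_cycleMins.2 fun j hj => ?_, hxp⟩, hcx.symm⟩
    exact c.support.min'_le j (hcx ▸ mem_support_cycleOf_iff.2 ⟨hj, hxp⟩)

theorem injOn_cycleOf_filter_mem_support_cycleMins :
    Set.InjOn p.cycleOf (p.cycleMins.filter (· ∈ p.support)) := by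
  intro i hi j hj hij
  rw [coe_filter] at hi hj
  have hji : j ∈ (p.cycleOf i).support := hij ▸ mem_support_cycleOf_iff.2 ⟨.refl _ _, hj.2⟩
  exact eq_of_mem_cycleMins_of_sameCycle hi.1 hj.1 (mem_support_cycleOf_iff.1 hji).1

theorem map_minimalPeriod_cycleMins :
    p.cycleMins.val.map (Function.minimalPeriod p) = p.partition.parts := by
  rw [← Multiset.filter_add_not (· ∈ p.support) p.cycleMins.val, Multiset.map_add,
    parts_partition]
  congr 1
  · rw [cycleType_def, ← image_cycleOf_filter_mem_support_cycleMins,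
      image_val_of_injOn injOn_cycleOf_filter_mem_support_cycleMins, Multiset.map_map]
    exact Multiset.map_congr rfl fun i hi =>
      minimalPeriod_eq_card_support_cycleOf (Multiset.mem_filter.1 hi).2
  · change (p.cycleMins.filter (· ∉ p.support)).val.map _ = _
    rw [filter_notMem_support_cycleMins, Multiset.map_congr rfl fun i hi =>
      Function.minimalPeriod_eq_one_iff_isFixedPt.2 (notMem_support.1 (mem_compl.1 hi)),
      Multiset.map_const', card_val, card_compl]

end Equiv.Perm

theorem Finset.sum_singleton_eq_map_val {ι : Type*} (s : Finset ι) (f : ι → ℕ) :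
    ∑ i ∈ s, ({f i} : Multiset ℕ) = s.val.map f := by
  rw [sum_eq_multiset_sum, ← Multiset.sum_map_singleton (s.val.map f), Multiset.map_map]
  rfl

theorem Nat.Partition.sum_map_filter_parts_eq {ι : Type*} (k : ℕ) (s : Finset ι)
    (g : ι → Multiset ℕ) (hg : ∀ i ∈ s, ∃ ρ : k.Partition, ρ.parts = g i) (f : ι → ℕ) :
    ∑ ρ : k.Partition, (s.filter (g · = ρ.parts)).val.map f = s.val.map f := by
  classical
  let e : k.Partition ↪ Multiset ℕ := ⟨Nat.Partition.parts, fun _ _ => Nat.Partition.ext⟩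
  have hs : ∀ i ∈ s, g i ∈ univ.map e := fun i hi => by
    obtain ⟨ρ, hρ⟩ := hg i hi
    exact hρ ▸ mem_map_of_mem e (mem_univ ρ)
  have key := sum_fiberwise_of_maps_to hs (fun i => ({f i} : Multiset ℕ))
  simp_rw [sum_map, Finset.sum_singleton_eq_map_val] at key
  exact key

namespace KWr

theorem sum_tyFam_eq_map_cycLen_cycleMins (k n : ℕ) (hk : 0 < k) (w : Perm (Fin (k * n))) :
    ∑ ρ, tyFam k n hk w ρ = (pPerm k n hk w).cycleMins.val.map (cycLen (pPerm k n hk w)) := by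
  have hρ (i : Fin n) : ∃ ρ : k.Partition, ρ.parts = (cycProd k n hk w i).partition.parts :=
    ⟨⟨(cycProd k n hk w i).partition.parts, Nat.Partition.parts_pos _,
      by rw [Nat.Partition.parts_sum, Fintype.card_fin]⟩, rfl⟩
  rw [← Nat.Partition.sum_map_filter_parts_eq k _ _ (fun i _ => hρ i)]
  refine sum_congr rfl fun ρ _ => ?_
  unfold tyFam
  congr 2
  ext i
  simp [Equiv.Perm.mem_cycleMins]

theorem tyFam_union_eq_cycleType_general (k n : ℕ) (hk : 0 < k) (w : Perm (Fin (k * n))) :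
    (∑ ρ : Nat.Partition k, tyFam k n hk w ρ) = (pPerm k n hk w).partition.parts ∧
    (∑ ρ : Nat.Partition k, (tyFam k n hk w ρ).sum) = n := by
  have hunion : ∑ ρ, tyFam k n hk w ρ = (pPerm k n hk w).partition.parts :=
    (sum_tyFam_eq_map_cycLen_cycleMins k n hk w).trans (pPerm k n hk w).map_minimalPeriod_cycleMins
  refine ⟨hunion, ?_⟩
  rw [← Multiset.sum_sum, hunion, Nat.Partition.parts_sum, Fintype.card_fin]

/-- For `w ∈ B_{kn}^k`, the union of the partitions `ω(ρ)` over the partitions `ρ` of `k`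
is the cycle type of the induced block permutation `p_w`, and `∑_ρ |ω(ρ)| = n`. -/
theorem tyFam_union_eq_cycleType (k n : ℕ) (hk : 0 < k) (w : Perm (Fin (k * n)))
    (hw : IsBlockPerm k n w) :
    (∑ ρ : Nat.Partition k, tyFam k n hk w ρ) = (pPerm k n hk w).partition.parts ∧
    (∑ ρ : Nat.Partition k, (tyFam k n hk w ρ).sum) = n :=
  tyFam_union_eq_cycleType_general k n hk w

end KWr
end
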